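/- For every integer k there exist integers x, y, z with min(|x|, |y|, |z|) ≥ k satisfying x^3 + y^3 + z^3 = 2. -/
import Mathlib


theorem stmt13 : ∀ k : ℤ, ∃ x y z : ℤ,
    min (min |x| |y|) |z| ≥ k ∧ x^3 + y^3 + z^3 = 2 := by
  intro k
  set t : ℤ := max k 1 with ht
  have ht1 : 1 ≤ t := le_max_right k 1
  have htk : k ≤ t := le_max_left k 1
  have ht3 : 1 ≤ t^3 := by nlinarith [sq_nonneg t, sq_nonneg (t-1)]
  refine ⟨1 + 6*t^3, 1 - 6*t^3, -6*t^2, ?_, by ring⟩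
  have h1 : |1 + 6*t^3| = 1 + 6*t^3 := abs_of_nonneg (by nlinarith)
  have h2 : |1 - 6*t^3| = 6*t^3 - 1 := by
    rw [abs_of_nonpos (by nlinarith)]; ring
  have h3 : |(-6*t^2 : ℤ)| = 6*t^2 := by
    rw [abs_of_nonpos (by nlinarith)]; ring
  rw [h1, h2, h3]
  refine le_min (le_min ?_ ?_) ?_ <;> nlinarith
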